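/- Let p ∈ (0,1), let G_0 ∼ ER(n,p), and run the standard edgelighter walk with parameters q1 = 1−p and q2 = p, initial configuration given by the edge set of G_0, and initial walker position uniform on the vertices and independent of G_0. Let A_0 and A_t be the adjacency matrices of G_0 and of the graph after t steps. Then for every pair {u,v} of distinct vertices, Corr(A_{0,u,v}, A_{t,u,v}) = 𝔭_{t,u,v}, where 𝔭_{t,u,v} = P({u,v} ≠ {L_s, L_{s+1}} for all 0 ≤ s ≤ t−1) is the probability that the pair {u,v} has not been traversed by the walker by time t. -/

import Mathlib

open scoped BigOperators
open scoped Classical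
open Finset Matrix

/-- Unordered pairs of distinct vertices. -/
abbrev EPair (n : ℕ) := {e : Sym2 (Fin n) // ¬ e.IsDiag}

/-- An on/off configuration on the pairs of distinct vertices. -/
abbrev EConfig (n : ℕ) := EPair n → Bool

/-- State of the standard edgelighter walk: walker position and configuration. -/
abbrev EState (n : ℕ) := Fin n × EConfig n

def mkEPair {n : ℕ} (u v : Fin n) (h : u ≠ v) : EPair n :=
  ⟨s(u, v), by simpa using h⟩

def flipAt {n : ℕ} (c : EConfig n) (e : EPair n) : EConfig n :=
  Function.update c e (! c e)

/-- One-step transition probabilities of the standard edgelighter walk with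
parameters `q1 q2` on `n` vertices. -/
noncomputable def elStep (n : ℕ) (q1 q2 : ℝ) : EState n → EState n → ℝ := fun x y =>
  if hvu : y.1 = x.1 then (if y.2 = x.2 then 1 / (n : ℝ) else 0)
  else
    let e : EPair n := mkEPair x.1 y.1 (Ne.symm hvu)
    let q : ℝ := if x.2 e then q1 else q2
    if y.2 = x.2 then (1 - q) / (n : ℝ)
    else if y.2 = flipAt x.2 e then q / (n : ℝ)
    else 0

/-- `t`-step transition probabilities of a kernel on a finite state space. -/
noncomputable def kPow {S : Type*} [Fintype S] (P : S → S → ℝ) : ℕ → S → S → ℝ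
  | 0 => fun x y => if x = y then 1 else 0
  | (t + 1) => fun x y => ∑ z : S, kPow P t x z * P z y

/-- Total variation distance between two distributions on a finite space. -/
noncomputable def tvDist {S : Type*} [Fintype S] (μ ν : S → ℝ) : ℝ :=
  (∑ x : S, |μ x - ν x|) / 2

def onCount {n : ℕ} (c : EConfig n) : ℕ := (Finset.univ.filter fun e => c e = true).card

def offCount {n : ℕ} (c : EConfig n) : ℕ := (Finset.univ.filter fun e => c e = false).card

noncomputable def elWeight {n : ℕ} (q1 q2 : ℝ) (x : EState n) : ℝ :=
  q2 ^ onCount x.2 * q1 ^ offCount x.2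

/-- The stationary distribution `π°` of the standard edgelighter walk,
`π°((u,c)) ∝ (1/n) q2^{#on(c)} q1^{#off(c)}`. -/
noncomputable def elStat (n : ℕ) (q1 q2 : ℝ) (x : EState n) : ℝ :=
  ((1 / (n : ℝ)) * elWeight q1 q2 x) / ∑ y : EState n, (1 / (n : ℝ)) * elWeight q1 q2 y

/-- Total variation mixing time of the standard edgelighter walk. -/
noncomputable def elMixingTime (n : ℕ) (q1 q2 : ℝ) : ℕ :=
  sInf {t : ℕ | ∀ x : EState n,
    tvDist (kPow (elStep n q1 q2) t x) (elStat n q1 q2) < 1 / 4}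

/-- The walker path determined by the start `l0` and `t` subsequent choices. -/
def walkSeq {n : ℕ} (t : ℕ) (l0 : Fin n) (f : Fin t → Fin n) : ℕ → Fin n :=
  fun i => if h : 0 < i ∧ i ≤ t then f ⟨i - 1, by omega⟩ else l0

/-- Probability, for the walk started at `l0` (each step uniform on the vertices),
that some unordered pair of distinct vertices has not been traversed within the
first `t` steps. -/
noncomputable def coverSurvival (n t : ℕ) (l0 : Fin n) : ℝ :=
  ((Finset.univ.filter fun f : Fin t → Fin n =>
      ∃ u v : Fin n, u ≠ v ∧ ∀ ℓ < t,
        s(walkSeq t l0 f ℓ, walkSeq t l0 f (ℓ + 1)) ≠ s(u, v)).card : ℝ) / (n : ℝ) ^ t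

/-- Expected cover time `E_{l0}[τ⁽ᵘ⁾_cover]`, via `E[τ] = ∑_{t ≥ 0} P(τ > t)`. -/
noncomputable def expCoverTime (n : ℕ) (l0 : Fin n) : ℝ := ∑' t : ℕ, coverSurvival n t l0

/-- `t⁽ᵘ⁾_cover`: maximum over starting states of the expected cover time. -/
noncomputable def maxExpCoverTime (n : ℕ) : ℝ := ⨆ l0 : Fin n, expCoverTime n l0
/-- Adjacency matrix of a configuration. -/
noncomputable def adjOf {n : ℕ} (c : EConfig n) : Matrix (Fin n) (Fin n) ℝ :=
  Matrix.of fun i j => if h : i = j then 0 else if c (mkEPair i j h) then 1 else 0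

/-- Permutation matrix of a permutation. -/
noncomputable def permMat {n : ℕ} (σ : Equiv.Perm (Fin n)) : Matrix (Fin n) (Fin n) ℝ :=
  Matrix.of fun i j => if σ i = j then 1 else 0

/-- Graph matching objective `Tr(A P B Pᵀ)`. -/
noncomputable def gmObj {n : ℕ} (c0 ct : EConfig n) (σ : Equiv.Perm (Fin n)) : ℝ :=
  Matrix.trace (adjOf c0 * permMat σ * adjOf ct * (permMat σ)ᵀ)

/-- Number of non-fixed points of a permutation. -/
def nonfixed {n : ℕ} (σ : Equiv.Perm (Fin n)) : ℕ :=
  (Finset.univ.filter fun i => σ i ≠ i).card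

/-- ER(n,p) probability of a given configuration. -/
noncomputable def erWeight (n : ℕ) (p : ℝ) (c : EConfig n) : ℝ :=
  p ^ onCount c * (1 - p) ^ offCount c
/-- Joint probability that the initial configuration (drawn from ER(n,p)) is `c0` and the
configuration after `t` steps of the standard edgelighter walk (with the initial walker
position uniform on the vertices, independent of the graph) is `ct`. -/
noncomputable def elJoint (n : ℕ) (p q1 q2 : ℝ) (t : ℕ) (c0 ct : EConfig n) : ℝ :=
  erWeight n p c0 *
    ∑ u : Fin n, (1 / (n : ℝ)) *
      ∑ v : Fin n, kPow (elStep n q1 q2) t (u, c0) (v, ct)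

/-- Probability that the pair `{u,v}` has not been traversed by the walker within the
first `t` steps, for the walk whose initial position is uniform on the vertices. -/
noncomputable def travProb (n t : ℕ) (u v : Fin n) : ℝ :=
  ((Finset.univ.filter fun g : Fin n × (Fin t → Fin n) =>
      ∀ ℓ < t, s(walkSeq t g.1 g.2 ℓ, walkSeq t g.1 g.2 (ℓ + 1)) ≠ s(u, v)).card : ℝ)
    / (n : ℝ) ^ (t + 1)
/-- Expectation of a function of the initial configuration and the configuration at
time `t`, under the joint law of the ER(n,p) graph and the edgelighter walk. -/
noncomputable def jointExp (n : ℕ) (p q1 q2 : ℝ) (t : ℕ)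
    (f : EConfig n → EConfig n → ℝ) : ℝ :=
  ∑ c0 : EConfig n, ∑ ct : EConfig n, elJoint n p q1 q2 t c0 ct * f c0 ct

/-! With `q1 = 1 - p` and `q2 = p`, a traversal of a pair gives it a fresh Bernoulli(`p`) status,
whatever its status was before. So from the state `(l, c)` the probability that a pair `e` is on
after `t` steps is `s * [c e] + (1 - s) * p`, where `s` is the probability that the walk from `l`
avoids `e` during `t` steps; this follows by checking the backward equation of the chain. Averaging
over the uniform start and the `ER(n, p)` configuration, `(A₀(e), A_t(e))` is a pair of
Bernoulli(`p`) variables which agree with probability `𝔭` and are independent otherwise, so their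
covariance is `𝔭 p (1 - p)` while both variances are `p (1 - p)`. -/

lemma sum_kPow_mul_of_backward {S : Type*} [Fintype S] (P : S → S → ℝ) (F : ℕ → S → ℝ)
    (hF : ∀ s x, ∑ z, P x z * F s z = F (s + 1) x) (t s : ℕ) (x : S) :
    ∑ y, kPow P t x y * F s y = F (s + t) x := by
  induction t generalizing s with
  | zero => simp [kPow]
  | succ t ih =>
    calc ∑ y, kPow P (t + 1) x y * F s y
        = ∑ z, kPow P t x z * ∑ y, P z y * F s y := by
          simp only [kPow, Finset.sum_mul, Finset.mul_sum, mul_assoc]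
          exact Finset.sum_comm
      _ = F (s + (t + 1)) x := by
          simp only [hF, ih, Nat.add_right_comm s 1 t, Nat.add_assoc]

noncomputable def bernoulliMean (p : ℝ) (h : Bool → ℝ) : ℝ := p * h true + (1 - p) * h false

lemma bernoulliMean_eq_resample (p : ℝ) (h : Bool → ℝ) (b : Bool) :
    (1 - (if b then 1 - p else p)) * h b + (if b then 1 - p else p) * h (!b) =
      bernoulliMean p h := by
  cases b <;> simp only [bernoulliMean, Bool.not_true, Bool.not_false, Bool.false_eq_true,
    if_true, if_false] <;> ring

section

variable {n : ℕ}

def avoidCount (e : Sym2 (Fin n)) (t : ℕ) (l0 : Fin n) : ℕ :=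
  (Finset.univ.filter fun f : Fin t → Fin n =>
    ∀ ℓ < t, s(walkSeq t l0 f ℓ, walkSeq t l0 f (ℓ + 1)) ≠ e).card

noncomputable def avoidProb (e : Sym2 (Fin n)) (t : ℕ) (l0 : Fin n) : ℝ :=
  avoidCount e t l0 / (n : ℝ) ^ t

lemma walkSeq_zero {t : ℕ} (l0 : Fin n) (f : Fin t → Fin n) : walkSeq t l0 f 0 = l0 := by
  simp [walkSeq]

lemma walkSeq_cons_succ {t ℓ : ℕ} (l0 w : Fin n) (f : Fin t → Fin n) (hℓ : ℓ ≤ t) :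
    walkSeq (t + 1) l0 (Fin.cons w f) (ℓ + 1) = walkSeq t w f ℓ := by
  rcases Nat.eq_zero_or_pos ℓ with rfl | hpos
  · simp [walkSeq]
  · obtain ⟨m, rfl⟩ : ∃ m, ℓ = m + 1 := ⟨ℓ - 1, by omega⟩
    simp only [walkSeq, dif_pos (⟨by omega, by omega⟩ : 0 < m + 1 + 1 ∧ m + 1 + 1 ≤ t + 1),
      dif_pos (⟨by omega, hℓ⟩ : 0 < m + 1 ∧ m + 1 ≤ t)]
    exact Fin.cons_succ (α := fun _ => Fin n) w f ⟨m, by omega⟩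

lemma avoids_cons_iff {t : ℕ} (e : Sym2 (Fin n)) (l0 w : Fin n) (f : Fin t → Fin n) :
    (∀ ℓ < t + 1, s(walkSeq (t + 1) l0 (Fin.cons w f) ℓ,
        walkSeq (t + 1) l0 (Fin.cons w f) (ℓ + 1)) ≠ e) ↔
      s(l0, w) ≠ e ∧ ∀ ℓ < t, s(walkSeq t w f ℓ, walkSeq t w f (ℓ + 1)) ≠ e := by
  have hfirst : walkSeq (t + 1) l0 (Fin.cons w f) 1 = w := by
    simpa [walkSeq_zero] using walkSeq_cons_succ l0 w f (Nat.zero_le t)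
  rw [Nat.forall_lt_succ_left, walkSeq_zero, hfirst]
  refine and_congr_right fun _ => forall₂_congr fun ℓ hℓ => ?_
  rw [walkSeq_cons_succ l0 w f hℓ.le, walkSeq_cons_succ l0 w f hℓ]

lemma avoidCount_succ (e : Sym2 (Fin n)) (t : ℕ) (l0 : Fin n) :
    avoidCount e (t + 1) l0 = ∑ w, if s(l0, w) = e then 0 else avoidCount e t w := by
  rw [avoidCount, Finset.card_filter, ← (Fin.consEquiv fun _ => Fin n).sum_comp,
    Fintype.sum_prod_type]
  refine Finset.sum_congr rfl fun w _ => ?_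
  have hcons : ∀ f : Fin t → Fin n, (Fin.consEquiv fun _ => Fin n) (w, f) = Fin.cons w f :=
    fun _ => rfl
  simp only [avoidCount, Finset.card_filter, hcons, avoids_cons_iff]
  split_ifs with hw <;> simp [hw]

lemma avoidProb_succ (e : Sym2 (Fin n)) (t : ℕ) (l0 : Fin n) :
    avoidProb e (t + 1) l0 = ∑ w, (if s(l0, w) = e then 0 else avoidProb e t w) / n := by
  simp only [avoidProb, avoidCount_succ, Nat.cast_sum, Nat.cast_ite, Nat.cast_zero,
    Finset.sum_div, pow_succ]
  refine Finset.sum_congr rfl fun w _ => ?_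
  split_ifs
  · simp
  · field_simp

lemma travProb_eq_sum_avoidProb (t : ℕ) (u v : Fin n) :
    travProb n t u v = ∑ l0, avoidProb s(u, v) t l0 / n := by
  simp only [travProb, avoidProb, avoidCount, Finset.card_filter, Fintype.sum_prod_type,
    Nat.cast_sum, Finset.sum_div, pow_succ]
  refine Finset.sum_congr rfl fun l0 _ => ?_
  field_simp

lemma avoidProb_zero (e : Sym2 (Fin n)) (l0 : Fin n) : avoidProb e 0 l0 = 1 := by
  simp [avoidProb, avoidCount]

lemma sum_affine_div (hn : (n : ℝ) ≠ 0) (a : Fin n → ℝ) (H E : ℝ) :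
    ∑ w, (a w * H + (1 - a w) * E) / n = (∑ w, a w / n) * H + (1 - ∑ w, a w / n) * E := by
  simp only [← Finset.sum_div, Finset.sum_add_distrib, ← Finset.sum_mul, Finset.sum_sub_distrib,
    Finset.sum_const, Finset.card_univ, Fintype.card_fin, nsmul_eq_mul, mul_one]
  field_simp

lemma flipAt_ne_self (c : EConfig n) (e : EPair n) : flipAt c e ≠ c := fun h => by
  simpa [flipAt] using congrFun h e

lemma flipAt_apply_of_ne {c : EConfig n} {e e' : EPair n} (h : e' ≠ e) : flipAt c e e' = c e' :=
  Function.update_of_ne h _ _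

lemma sum_elStep_mul (q1 q2 : ℝ) (x : EState n) (g : EState n → ℝ) :
    ∑ z, elStep n q1 q2 x z * g z =
      ∑ w, (if h : w = x.1 then g x else
        (1 - (if x.2 (mkEPair x.1 w (Ne.symm h)) then q1 else q2)) * g (w, x.2) +
          (if x.2 (mkEPair x.1 w (Ne.symm h)) then q1 else q2) *
            g (w, flipAt x.2 (mkEPair x.1 w (Ne.symm h)))) / n := by
  rw [Fintype.sum_prod_type]
  refine Finset.sum_congr rfl fun w _ => ?_
  by_cases hw : w = x.1
  · subst hw
    simp [elStep, ite_mul, div_eq_inv_mul]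
  · have hflip := flipAt_ne_self x.2 (mkEPair x.1 w (Ne.symm hw))
    rw [Fintype.sum_eq_add x.2 _ (Ne.symm hflip) fun c hc => by simp [elStep, hw, hc.1, hc.2]]
    simp only [elStep, dif_neg hw, if_neg hflip, if_true]
    ring

lemma sum_elStep_mul_avoidProb (hn : 0 < n) (p : ℝ) (e : EPair n) (f : Bool → ℝ) (s : ℕ)
    (x : EState n) :
    ∑ z, elStep n (1 - p) p x z *
        (avoidProb e.1 s z.1 * f (z.2 e) + (1 - avoidProb e.1 s z.1) * bernoulliMean p f) =
      avoidProb e.1 (s + 1) x.1 * f (x.2 e) +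
        (1 - avoidProb e.1 (s + 1) x.1) * bernoulliMean p f := by
  rw [sum_elStep_mul, avoidProb_succ, ← sum_affine_div (by positivity)]
  refine Finset.sum_congr rfl fun w _ => ?_
  congr 1
  by_cases hw : w = x.1
  · subst hw
    rw [dif_pos rfl, if_neg fun hd : s(x.1, x.1) = e.1 => e.2 (hd ▸ Sym2.mk_isDiag_iff.2 rfl)]
  rw [dif_neg hw]
  dsimp only
  by_cases he : mkEPair x.1 w (Ne.symm hw) = e
  · rw [if_pos (show s(x.1, w) = e.1 from congrArg Subtype.val he), he, flipAt,
      Function.update_self, ← bernoulliMean_eq_resample p f (x.2 e)]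
    ring
  · rw [if_neg fun hd : s(x.1, w) = e.1 => he (Subtype.ext hd), flipAt_apply_of_ne (Ne.symm he)]
    ring

lemma sum_kPow_elStep_mul (hn : 0 < n) (p : ℝ) (e : EPair n) (f : Bool → ℝ) (t : ℕ)
    (x : EState n) :
    ∑ y, kPow (elStep n (1 - p) p) t x y * f (y.2 e) =
      avoidProb e.1 t x.1 * f (x.2 e) + (1 - avoidProb e.1 t x.1) * bernoulliMean p f := by
  simpa [avoidProb_zero] using
    sum_kPow_mul_of_backward _ _ (sum_elStep_mul_avoidProb hn p e f) t 0 x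

lemma jointExp_eq_sum_kPow (p q1 q2 : ℝ) (t : ℕ) (f : EConfig n → EConfig n → ℝ) :
    jointExp n p q1 q2 t f =
      ∑ c0, erWeight n p c0 * ∑ l, (∑ y, kPow (elStep n q1 q2) t (l, c0) y * f c0 y.2) / n := by
  simp only [jointExp, elJoint, Fintype.sum_prod_type]
  refine Finset.sum_congr rfl fun c0 _ => ?_
  simp only [Finset.mul_sum, Finset.sum_mul, Finset.sum_div]
  rw [Finset.sum_comm]
  refine Finset.sum_congr rfl fun l _ => ?_
  rw [Finset.sum_comm]
  exact Finset.sum_congr rfl fun w _ => Finset.sum_congr rfl fun ct _ => by ring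

lemma erWeight_eq_prod (p : ℝ) (c : EConfig n) :
    erWeight n p c = ∏ e, if c e then p else 1 - p := by
  rw [Finset.prod_ite, Finset.prod_const, Finset.prod_const, erWeight, onCount, offCount]
  simp_rw [Bool.not_eq_true]

lemma sum_erWeight_mul (p : ℝ) (e : EPair n) (g : Bool → ℝ) :
    ∑ c : EConfig n, erWeight n p c * g (c e) = bernoulliMean p g := by
  have hfactor : ∀ c : EConfig n, erWeight n p c * g (c e) =
      ∏ e', (if c e' then p else 1 - p) * (if e' = e then g (c e') else 1) := by
    intro c
    rw [Finset.prod_mul_distrib, ← erWeight_eq_prod, Finset.prod_ite_eq']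
    simp
  rw [Finset.sum_congr rfl fun c _ => hfactor c,
    ← Fintype.prod_sum fun e' b => (if b then p else 1 - p) * (if e' = e then g b else 1)]
  rw [Fintype.prod_eq_single e fun e' he' => by simp [he']]
  simp [bernoulliMean]

lemma jointExp_eval_mkEPair (p : ℝ) (t : ℕ) {u v : Fin n} (huv : u ≠ v)
    (g : Bool → Bool → ℝ) :
    jointExp n p (1 - p) p t (fun c0 ct => g (c0 (mkEPair u v huv)) (ct (mkEPair u v huv))) =
      bernoulliMean p fun b =>
        travProb n t u v * g b b + (1 - travProb n t u v) * bernoulliMean p (g b) := by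
  rw [jointExp_eq_sum_kPow, ← sum_erWeight_mul p (mkEPair u v huv)]
  refine Finset.sum_congr rfl fun c0 _ => ?_
  simp only [sum_kPow_elStep_mul u.pos, sum_affine_div (Nat.cast_ne_zero.2 u.pos.ne'),
    travProb_eq_sum_avoidProb]
  rfl

end

theorem edgelighter_edge_correlation_general (n : ℕ)
    (p : ℝ) (hp : p ∈ Set.Ioo (0 : ℝ) 1) (t : ℕ)
    (u v : Fin n) (huv : u ≠ v) :
    (jointExp n p (1 - p) p t
        (fun c0 ct => (if c0 (mkEPair u v huv) then 1 else 0) *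
          (if ct (mkEPair u v huv) then 1 else 0)) -
      jointExp n p (1 - p) p t (fun c0 _ => if c0 (mkEPair u v huv) then 1 else 0) *
        jointExp n p (1 - p) p t (fun _ ct => if ct (mkEPair u v huv) then 1 else 0)) /
    (Real.sqrt
        (jointExp n p (1 - p) p t
            (fun c0 _ => (if c0 (mkEPair u v huv) then 1 else 0) ^ 2) -
          (jointExp n p (1 - p) p t (fun c0 _ => if c0 (mkEPair u v huv) then 1 else 0)) ^ 2) *
      Real.sqrt
        (jointExp n p (1 - p) p t
            (fun _ ct => (if ct (mkEPair u v huv) then 1 else 0) ^ 2) -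
          (jointExp n p (1 - p) p t (fun _ ct => if ct (mkEPair u v huv) then 1 else 0)) ^ 2))
      = travProb n t u v := by
  obtain ⟨hp0, hp1⟩ := hp
  have moment := jointExp_eval_mkEPair p t huv
  rw [moment fun b b' => (if b then 1 else 0) * (if b' then 1 else 0),
    moment fun b _ => if b then 1 else 0, moment fun _ b' => if b' then 1 else 0,
    moment fun b _ => (if b then 1 else 0) ^ 2, moment fun _ b' => (if b' then 1 else 0) ^ 2]
  simp only [bernoulliMean, if_true, Bool.false_eq_true, if_false]
  have hvar : 0 < p * (1 - p) := mul_pos hp0 (sub_pos.2 hp1)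
  have hcorr : (p * (travProb n t u v + (1 - travProb n t u v) * p) - p * p) /
      (√(p * (1 - p)) * √(p * (1 - p))) = travProb n t u v := by
    rw [Real.mul_self_sqrt hvar.le]
    field_simp
    ring
  convert hcorr using 4 <;> ring

/-- For `G₀ ∼ ER(n,p)` and the standard edgelighter walk with
`q1 = 1-p`, `q2 = p`, the Pearson correlation of the indicators of the pair `{u,v}` in
`A₀` and in `A_t` equals `𝔭_{t,u,v}`, the probability that the pair has not been
traversed by time `t`. -/
theorem edgelighter_edge_correlation (n : ℕ) (hn : 2 ≤ n)
    (p : ℝ) (hp : p ∈ Set.Ioo (0 : ℝ) 1) (t : ℕ) (ht : 1 ≤ t)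
    (u v : Fin n) (huv : u ≠ v) :
    (jointExp n p (1 - p) p t
        (fun c0 ct => (if c0 (mkEPair u v huv) then 1 else 0) *
          (if ct (mkEPair u v huv) then 1 else 0)) -
      jointExp n p (1 - p) p t (fun c0 _ => if c0 (mkEPair u v huv) then 1 else 0) *
        jointExp n p (1 - p) p t (fun _ ct => if ct (mkEPair u v huv) then 1 else 0)) /
    (Real.sqrt
        (jointExp n p (1 - p) p t
            (fun c0 _ => (if c0 (mkEPair u v huv) then 1 else 0) ^ 2) -
          (jointExp n p (1 - p) p t (fun c0 _ => if c0 (mkEPair u v huv) then 1 else 0)) ^ 2) *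
      Real.sqrt
        (jointExp n p (1 - p) p t
            (fun _ ct => (if ct (mkEPair u v huv) then 1 else 0) ^ 2) -
          (jointExp n p (1 - p) p t (fun _ ct => if ct (mkEPair u v huv) then 1 else 0)) ^ 2))
      = travProb n t u v :=
  edgelighter_edge_correlation_general n p hp t u v huv
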